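/- (Cochran, part 2) Let X be an isotropic Gaussian random vector on ℝⁿ with law N(μ, σ²Iₙ), let F ⊆ ℝⁿ be a linear subspace, and let P_F and P_{F⊥} denote the orthogonal projections onto F and its orthogonal complement F⊥ respectively. Then the random vectors P_F X and P_{F⊥} X are independent. -/

import Mathlib

open Matrix MeasureTheory ProbabilityTheory Classical

/-- The multivariate Gaussian measure on `ℝⁿ` with mean `m` and (positive semidefinite)
covariance matrix `S`: the pushforward of a vector of `n` i.i.d. standard Gaussians under
`x ↦ m + √S x`, where `√S` is the positive semidefinite square root of `S`.
(Junk value `0` if `S` is not positive semidefinite.) -/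
noncomputable def multiGaussian {n : ℕ} (m : Fin n → ℝ) (S : Matrix (Fin n) (Fin n) ℝ) :
    Measure (Fin n → ℝ) :=
  if hS : S.PosSemidef then
    Measure.map (fun x => m + ((hS.1.eigenvectorUnitary : Matrix (Fin n) (Fin n) ℝ) *
      diagonal (Real.sqrt ∘ hS.1.eigenvalues) *
      (star hS.1.eigenvectorUnitary : Matrix (Fin n) (Fin n) ℝ)).mulVec x)
      (Measure.pi fun _ : Fin n => gaussianReal 0 1)
  else 0

/-!
Identify `ℝⁿ` with `EuclideanSpace ℝ (Fin n)`. There `X` has Mathlib's law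
`multivariateGaussian μ (σ² • 1)`, whose covariance form is `σ² ⟪a, b⟫`: components of `X` in
orthogonal directions are uncorrelated. The pair `(P_F X, P_{F⊥} X)` is a linear image of `X`, hence
jointly Gaussian, and `⟪x, P_F X⟫ = ⟪P_F x, X⟫` with `P_F x ⊥ P_{F⊥} y`, so its two components are
uncorrelated, which for a jointly Gaussian pair means independent.
-/

open scoped MatrixOrder RealInnerProductSpace

namespace ProbabilityTheory

variable {Ω E : Type*} {mΩ : MeasurableSpace Ω} {P : Measure Ω}
  [NormedAddCommGroup E] [InnerProductSpace ℝ E] [CompleteSpace E] [SecondCountableTopology E]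
  [MeasurableSpace E] [BorelSpace E]

lemma HasGaussianLaw.indepFun_starProjection {Y : Ω → E} (hY : HasGaussianLaw Y P)
    (hiso : ∀ a b, ⟪a, b⟫ = 0 → cov[fun ω ↦ ⟪a, Y ω⟫, fun ω ↦ ⟪b, Y ω⟫; P] = 0)
    (K : Submodule ℝ E) [K.HasOrthogonalProjection] :
    IndepFun (fun ω ↦ K.starProjection (Y ω)) (fun ω ↦ Kᗮ.starProjection (Y ω)) P := by
  refine HasGaussianLaw.indepFun_of_covariance_inner
    (hY.map_fun (K.starProjection.prod Kᗮ.starProjection)) fun x y ↦ ?_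
  simp_rw [← Submodule.inner_starProjection_left_eq_right]
  exact hiso _ _ (Submodule.inner_right_of_mem_orthogonal (K.starProjection_apply_mem x)
    (Kᗮ.starProjection_apply_mem y))

lemma covarianceBilin_multivariateGaussian_smul_one {ι : Type*} [Fintype ι] [DecidableEq ι]
    (μ : EuclideanSpace ℝ ι) {c : ℝ} (hc : 0 ≤ c) (x y : EuclideanSpace ℝ ι) :
    covarianceBilin (multivariateGaussian μ (c • 1)) x y = c * ⟪x, y⟫ := by
  rw [covarianceBilin_multivariateGaussian (PosSemidef.one.smul hc)]
  simp [EuclideanSpace.inner_eq_star_dotProduct, dotProduct_comm, Matrix.smul_mulVec]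

end ProbabilityTheory

lemma Matrix.PosSemidef.sqrt_eq_eigenvectorUnitary_mul_diagonal {n : ℕ}
    {S : Matrix (Fin n) (Fin n) ℝ} (hS : S.PosSemidef) :
    CFC.sqrt S = (hS.1.eigenvectorUnitary : Matrix (Fin n) (Fin n) ℝ) *
      diagonal (Real.sqrt ∘ hS.1.eigenvalues) *
      (star hS.1.eigenvectorUnitary : Matrix (Fin n) (Fin n) ℝ) := by
  rw [CFC.sqrt_eq_real_sqrt S hS.nonneg, cfcₙ_eq_cfc, hS.1.cfc_eq, IsHermitian.cfc,
    Unitary.conjStarAlgAut_apply]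
  rfl

lemma map_toLp_multiGaussian {n : ℕ} (m : Fin n → ℝ) {S : Matrix (Fin n) (Fin n) ℝ}
    (hS : S.PosSemidef) :
    (multiGaussian m S).map (WithLp.toLp 2) = multivariateGaussian (WithLp.toLp 2 m) S := by
  rw [multiGaussian, dif_pos hS, multivariateGaussian, ← map_pi_eq_stdGaussian,
    hS.sqrt_eq_eigenvectorUnitary_mul_diagonal, Measure.map_map (by fun_prop) (by fun_prop),
    Measure.map_map (by fun_prop) (by fun_prop)]
  rfl

lemma mulVec_eq_ofLp_starProjection {ι : Type*} [Fintype ι]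
    {F : Submodule ℝ (EuclideanSpace ℝ ι)} {P : Matrix ι ι ℝ}
    (hP : ∀ x : EuclideanSpace ℝ ι,
      Matrix.toEuclideanLin P x = (F.orthogonalProjectionOnto x : EuclideanSpace ℝ ι))
    (v : ι → ℝ) : P *ᵥ v = (F.starProjection (WithLp.toLp 2 v)).ofLp :=
  congrArg WithLp.ofLp (hP (WithLp.toLp 2 v))

theorem cochran_indep_general {Ω : Type*} [MeasurableSpace Ω] (Pr : Measure Ω)
    {n : ℕ} (μ : Fin n → ℝ) (σ : ℝ)
    (X : Ω → Fin n → ℝ) (hX : Measurable X)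
    (hlaw : Measure.map X Pr = multiGaussian μ (σ ^ 2 • (1 : Matrix (Fin n) (Fin n) ℝ)))
    (F : Submodule ℝ (EuclideanSpace ℝ (Fin n))) (P Q : Matrix (Fin n) (Fin n) ℝ)
    (hP : ∀ x : EuclideanSpace ℝ (Fin n),
      Matrix.toEuclideanLin P x = (F.orthogonalProjectionOnto x : EuclideanSpace ℝ (Fin n)))
    (hQ : ∀ x : EuclideanSpace ℝ (Fin n),
      Matrix.toEuclideanLin Q x = (Fᗮ.orthogonalProjectionOnto x : EuclideanSpace ℝ (Fin n))) :
    IndepFun (fun ω => P.mulVec (X ω)) (fun ω => Q.mulVec (X ω)) Pr := by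
  set Y : Ω → EuclideanSpace ℝ (Fin n) := fun ω ↦ WithLp.toLp 2 (X ω)
  have hY : HasLaw Y (multivariateGaussian (WithLp.toLp 2 μ) (σ ^ 2 • 1)) Pr := by
    refine ⟨by fun_prop, ?_⟩
    rw [← map_toLp_multiGaussian μ (PosSemidef.one.smul (sq_nonneg σ)), ← hlaw,
      Measure.map_map (by fun_prop) hX]
    rfl
  have hiso (a b : EuclideanSpace ℝ (Fin n)) (hab : ⟪a, b⟫ = 0) :
      cov[fun ω ↦ ⟪a, Y ω⟫, fun ω ↦ ⟪b, Y ω⟫; Pr] = 0 := by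
    rw [hY.covariance_fun_comp (by fun_prop) (by fun_prop),
      ← covarianceBilin_apply_eq_cov IsGaussian.memLp_two_id,
      covarianceBilin_multivariateGaussian_smul_one _ (sq_nonneg σ), hab, mul_zero]
  simp_rw [mulVec_eq_ofLp_starProjection hP, mulVec_eq_ofLp_starProjection hQ]
  exact (hY.hasGaussianLaw.indepFun_starProjection hiso F).comp (by fun_prop) (by fun_prop)

/-- Cochran, part 2: if `X ~ N(μ, σ²Iₙ)` and `P`, `Q` are the matrices of the orthogonal
projections onto a subspace `F ⊆ ℝⁿ` and onto `Fᗮ`, then `P X` and `Q X` are independent. -/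
theorem cochran_indep {Ω : Type*} [MeasurableSpace Ω] (Pr : Measure Ω) [IsProbabilityMeasure Pr]
    {n : ℕ} (hn : 1 ≤ n) (μ : Fin n → ℝ) (σ : ℝ) (hσ : 0 < σ)
    (X : Ω → Fin n → ℝ) (hX : Measurable X)
    (hlaw : Measure.map X Pr = multiGaussian μ (σ ^ 2 • (1 : Matrix (Fin n) (Fin n) ℝ)))
    (F : Submodule ℝ (EuclideanSpace ℝ (Fin n))) (P Q : Matrix (Fin n) (Fin n) ℝ)
    (hP : ∀ x : EuclideanSpace ℝ (Fin n),
      Matrix.toEuclideanLin P x = (F.orthogonalProjectionOnto x : EuclideanSpace ℝ (Fin n)))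
    (hQ : ∀ x : EuclideanSpace ℝ (Fin n),
      Matrix.toEuclideanLin Q x = (Fᗮ.orthogonalProjectionOnto x : EuclideanSpace ℝ (Fin n))) :
    IndepFun (fun ω => P.mulVec (X ω)) (fun ω => Q.mulVec (X ω)) Pr :=
  cochran_indep_general Pr μ σ X hX hlaw F P Q hP hQ
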